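/- arXiv:2307.05178 — 4 statements merged into one kernel-verified Lean document; each statement's English description precedes it below -/
import Mathlib

section
/- Let $1 < p' < 2$ and let $\kappa^*_\zeta$ be the regularized integrand with relaxation interval $\zeta = [\zeta_-, \zeta_+]$. Then for all $t \geq 0$ and all nested intervals $[\zeta^2_-, \zeta^2_+] \subset [\zeta^1_-, \zeta^1_+] \subset (0,\infty)$: $\frac{1}{p'} t^{p'} \leq \kappa^*_{\zeta^1}(t) \leq \kappa^*_{\zeta^2}(t)$. -/
private lemma hasDerivAt_gaux (p' t ζ : ℝ) (hζ : ζ ≠ 0) :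
    HasDerivAt (fun x : ℝ => (1/2)*x^(p'-2)*t^2 + (1/p'-1/2)*x^p')
      ((1/2)*((p'-2)*ζ^(p'-2-1))*t^2 + (1/p'-1/2)*(p'*ζ^(p'-1))) ζ := by
  have h1 := Real.hasDerivAt_rpow_const (x := ζ) (p := p'-2) (Or.inl hζ)
  have h2 := Real.hasDerivAt_rpow_const (x := ζ) (p := p') (Or.inl hζ)
  exact ((h1.const_mul (1/2)).mul_const (t^2)).add (h2.const_mul (1/p'-1/2))

private lemma key1 (p' ζ t : ℝ) (hp1 : 1 < p') (hp2 : p' < 2) (hζ : 0 < ζ) (ht : 0 ≤ t) :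
    (1/p') * t^p' ≤ (1/2)*ζ^(p'-2)*t^2 + (1/p'-1/2)*ζ^p' := by
  have hp0 : (0:ℝ) < p' := by linarith
  have hgm := Real.geom_mean_le_arith_mean2_weighted (w₁ := p'/2) (w₂ := 1 - p'/2)
    (p₁ := t^2/ζ^2) (p₂ := 1) (by positivity) (by linarith) (by positivity) zero_le_one
    (by ring)
  rw [Real.one_rpow, mul_one, mul_one] at hgm
  have hdiv : (t^2/ζ^2 : ℝ) ^ (p'/2) = t^p' / ζ^p' := by
    have h1 : (t^2/ζ^2 : ℝ) = (t/ζ)^2 := by ring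
    have h2 : ((t/ζ):ℝ)^(2:ℕ) = (t/ζ) ^ ((2:ℕ):ℝ) := (Real.rpow_natCast _ 2).symm
    have htζ : (0:ℝ) ≤ t/ζ := by positivity
    rw [h1, h2, ← Real.rpow_mul htζ]
    norm_num
    rw [show (2:ℝ) * (p'/2) = p' by ring, Real.div_rpow ht hζ.le]
  rw [hdiv, div_le_iff₀ (by positivity : (0:ℝ) < ζ^p')] at hgm
  have hsub : ζ^(p'-2) = ζ^p' / ζ^2 := by
    rw [Real.rpow_sub hζ, Real.rpow_two]
  calc (1/p') * t^p' ≤ (1/p') * ((p'/2 * (t^2/ζ^2) + (1 - p'/2)) * ζ^p') := by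
        apply mul_le_mul_of_nonneg_left hgm (by positivity)
    _ = (1/2)*ζ^(p'-2)*t^2 + (1/p'-1/2)*ζ^p' := by
        rw [hsub]; field_simp

private lemma mono_aux (p' t a b : ℝ) (hp1 : 1 < p') (hp2 : p' < 2) (ht : 0 ≤ t)
    (ha : 0 < a) (hta : t ≤ a) (hab : a ≤ b) :
    (1/2)*a^(p'-2)*t^2 + (1/p'-1/2)*a^p' ≤ (1/2)*b^(p'-2)*t^2 + (1/p'-1/2)*b^p' := by
  set f : ℝ → ℝ := fun x => (1/2)*x^(p'-2)*t^2 + (1/p'-1/2)*x^p' with hf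
  have hmono : MonotoneOn f (Set.Icc a b) := by
    apply monotoneOn_of_deriv_nonneg (convex_Icc a b)
    · intro x hx
      have hx0 : x ≠ 0 := by have := hx.1; intro h; rw [h] at this; linarith
      exact (hasDerivAt_gaux p' t x hx0).continuousAt.continuousWithinAt
    · intro x hx
      rw [interior_Icc] at hx
      have hx0 : x ≠ 0 := by have := hx.1; intro h; rw [h] at this; linarith
      exact (hasDerivAt_gaux p' t x hx0).differentiableAt.differentiableWithinAt
    · intro x hx
      rw [interior_Icc] at hx
      have hx0 : (0:ℝ) < x := lt_trans ha hx.1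
      rw [(hasDerivAt_gaux p' t x hx0.ne').deriv]
      have hsplit : x^(p'-1) = x^2 * x^(p'-2-1) := by
        rw [← Real.rpow_two, ← Real.rpow_add hx0]; ring_nf
      have hpow : (0:ℝ) < x^(p'-2-1) := Real.rpow_pos_of_pos hx0 _
      have ht2 : t^2 ≤ x^2 := by nlinarith [hx.1]
      rw [hsplit]
      have hp0 : p' ≠ 0 := by linarith
      have heq : 1/2*((p'-2)*x^(p'-2-1))*t^2 + (1/p'-1/2)*(p'*(x^2*x^(p'-2-1)))
          = x^(p'-2-1)*((2-p')/2*(x^2-t^2)) := by field_simp; ring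
      rw [heq]
      have : (0:ℝ) ≤ (2-p')/2*(x^2-t^2) := by nlinarith
      positivity
  exact hmono (Set.left_mem_Icc.2 hab) (Set.right_mem_Icc.2 hab) hab

private lemma anti_aux (p' t a b : ℝ) (hp1 : 1 < p') (hp2 : p' < 2)
    (ha : 0 < a) (hab : a ≤ b) (hbt : b ≤ t) :
    (1/2)*b^(p'-2)*t^2 + (1/p'-1/2)*b^p' ≤ (1/2)*a^(p'-2)*t^2 + (1/p'-1/2)*a^p' := by
  set f : ℝ → ℝ := fun x => (1/2)*x^(p'-2)*t^2 + (1/p'-1/2)*x^p' with hf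
  have hanti : AntitoneOn f (Set.Icc a b) := by
    apply antitoneOn_of_deriv_nonpos (convex_Icc a b)
    · intro x hx
      have hx0 : x ≠ 0 := by have := hx.1; intro h; rw [h] at this; linarith
      exact (hasDerivAt_gaux p' t x hx0).continuousAt.continuousWithinAt
    · intro x hx
      rw [interior_Icc] at hx
      have hx0 : x ≠ 0 := by have := hx.1; intro h; rw [h] at this; linarith
      exact (hasDerivAt_gaux p' t x hx0).differentiableAt.differentiableWithinAt
    · intro x hx
      rw [interior_Icc] at hx
      have hx0 : (0:ℝ) < x := lt_of_lt_of_le ha hx.1.le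
      rw [(hasDerivAt_gaux p' t x hx0.ne').deriv]
      have hsplit : x^(p'-1) = x^2 * x^(p'-2-1) := by
        rw [← Real.rpow_two, ← Real.rpow_add hx0]; ring_nf
      have hpow : (0:ℝ) < x^(p'-2-1) := Real.rpow_pos_of_pos hx0 _
      have ht2 : x^2 ≤ t^2 := by nlinarith [hx.2, hx0]
      rw [hsplit]
      have hp0 : p' ≠ 0 := by linarith
      have heq : 1/2*((p'-2)*x^(p'-2-1))*t^2 + (1/p'-1/2)*(p'*(x^2*x^(p'-2-1)))
          = x^(p'-2-1)*((2-p')/2*(x^2-t^2)) := by field_simp; ring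
      rw [heq]
      have h1 : (2-p')/2*(x^2-t^2) ≤ 0 := by nlinarith
      exact mul_nonpos_of_nonneg_of_nonpos hpow.le h1
  exact hanti (Set.left_mem_Icc.2 hab) (Set.right_mem_Icc.2 hab) hab


/-- The regularized integrand `κ*_ζ` with relaxation interval `[ζ₋, ζ₊]`. -/
noncomputable def kappaStar (p' ζm ζp : ℝ) (t : ℝ) : ℝ :=
  if t ≤ ζm then (1 / 2) * ζm ^ (p' - 2) * t ^ 2 + (1 / p' - 1 / 2) * ζm ^ p'
  else if t ≤ ζp then (1 / p') * t ^ p'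
  else (1 / 2) * ζp ^ (p' - 2) * t ^ 2 + (1 / p' - 1 / 2) * ζp ^ p'

/-- Monotonicity of the regularized integrand in the relaxation interval:
for nested intervals `[ζ²₋, ζ²₊] ⊂ [ζ¹₋, ζ¹₊] ⊂ (0, ∞)`, and `1 < p' < 2`,
`(1/p') t^{p'} ≤ κ*_{ζ¹}(t) ≤ κ*_{ζ²}(t)` for all `t ≥ 0`. -/
theorem stmt_9 (p' : ℝ) (hp'1 : 1 < p') (hp'2 : p' < 2)
    (ζm₁ ζp₁ ζm₂ ζp₂ : ℝ)
    (h1 : 0 < ζm₁) (h2 : ζm₁ ≤ ζm₂) (h3 : ζm₂ ≤ ζp₂) (h4 : ζp₂ ≤ ζp₁) :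
    ∀ t : ℝ, 0 ≤ t →
      (1 / p') * t ^ p' ≤ kappaStar p' ζm₁ ζp₁ t ∧
      kappaStar p' ζm₁ ζp₁ t ≤ kappaStar p' ζm₂ ζp₂ t := by
  intro t ht
  have h0m2 : 0 < ζm₂ := lt_of_lt_of_le h1 h2
  have h0p2 : 0 < ζp₂ := lt_of_lt_of_le h0m2 h3
  have h0p1 : 0 < ζp₁ := lt_of_lt_of_le h0p2 h4
  constructor
  · unfold kappaStar
    split_ifs with hA hB
    · exact key1 p' ζm₁ t hp'1 hp'2 h1 ht
    · exact le_refl _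
    · exact key1 p' ζp₁ t hp'1 hp'2 h0p1 ht
  · unfold kappaStar
    split_ifs with hA hB hC hD hE hF hG hH
    · exact mono_aux p' t ζm₁ ζm₂ hp'1 hp'2 ht h1 hA h2
    · linarith
    · linarith
    · exact key1 p' ζm₂ t hp'1 hp'2 h0m2 ht
    · exact le_refl _
    · exact key1 p' ζp₂ t hp'1 hp'2 h0p2 ht
    · linarith
    · linarith
    · exact anti_aux p' t ζp₂ ζp₁ hp'1 hp'2 h0p2 h4 (by linarith)
end

section
/- Let $1 < p' < 2$, $\zeta = [\zeta_-, \zeta_+] \subset (0, \infty)$, and $\kappa^*_\zeta$ the regularized integrand. Then for all $t \geq 0$: $\kappa^*_\zeta(t) - \frac{1}{p'} t^{p'} \leq \frac{1}{p'}\zeta_-^{p'} + \frac{1}{2}\zeta_+^{p'-2} t^2 \cdot \mathbf{1}_{\{t > \zeta_+\}}$, and in particular for any $r > 2$: $\kappa^*_\zeta(t) - \frac{1}{p'}t^{p'} \leq \frac{1}{p'}\zeta_-^{p'} + \frac{1}{p'}\zeta_+^{p'-r} t^r$. -/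
lemma aux1 (p' ζm ζp : ℝ) (hp'1 : 1 < p') (hp'2 : p' < 2)
    (hζm : 0 < ζm) (hζ : ζm ≤ ζp) :
    ∀ t : ℝ, 0 ≤ t →
      kappaStar p' ζm ζp t - (1 / p') * t ^ p' ≤
        (1 / p') * ζm ^ p' +
          (if ζp < t then (1 / 2) * ζp ^ (p' - 2) * t ^ 2 else 0) := by
  intro t ht
  have hp0 : (0:ℝ) < p' := by linarith
  have h1p : (0:ℝ) < 1 / p' := by positivity
  have hζp : (0:ℝ) < ζp := lt_of_lt_of_le hζm hζ
  have htp : (0:ℝ) ≤ t ^ p' := Real.rpow_nonneg ht _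
  have hζmp : (0:ℝ) ≤ ζm ^ p' := Real.rpow_nonneg hζm.le _
  have hζpp : (0:ℝ) ≤ ζp ^ p' := Real.rpow_nonneg hζp.le _
  unfold kappaStar
  split_ifs with h1 h2 h3 h4 h5
  · exact absurd (h1.trans hζ) (not_le.2 h2)
  · -- t ≤ ζm
    have e1 : ζm ^ (p' - 2) * ζm ^ (2:ℕ) = ζm ^ p' := by
      rw [← Real.rpow_natCast ζm 2, ← Real.rpow_add hζm]
      norm_num
    have e2 : t ^ (2:ℕ) ≤ ζm ^ (2:ℕ) := pow_le_pow_left₀ ht h1 2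
    have key : ζm ^ (p' - 2) * t ^ (2:ℕ) ≤ ζm ^ p' := by
      calc ζm ^ (p' - 2) * t ^ (2:ℕ) ≤ ζm ^ (p' - 2) * ζm ^ (2:ℕ) :=
            mul_le_mul_of_nonneg_left e2 (Real.rpow_pos_of_pos hζm _).le
        _ = ζm ^ p' := e1
    nlinarith [mul_nonneg h1p.le htp]
  · -- ζm < t ≤ ζp, but ζp < t : contradiction
    exact absurd h4 (not_lt.2 h3)
  · -- ζm < t ≤ ζp
    nlinarith [mul_nonneg h1p.le hζmp]
  · -- t > ζp
    have hζpt : ζp ^ p' ≤ t ^ p' := Real.rpow_le_rpow hζp.le h5.le hp0.le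
    nlinarith [mul_nonneg h1p.le (sub_nonneg.2 hζpt), mul_nonneg h1p.le hζmp]
  · exact absurd (not_le.1 h3) h5

/-- Bounds on the regularization error of `κ*_ζ`: for `1 < p' < 2`,
`0 < ζ₋ ≤ ζ₊`, and all `t ≥ 0`,
`κ*_ζ(t) - (1/p')t^{p'} ≤ (1/p')ζ₋^{p'} + (1/2)ζ₊^{p'-2} t² 𝟙_{t > ζ₊}`,
and for any `r > 2`,
`κ*_ζ(t) - (1/p')t^{p'} ≤ (1/p')ζ₋^{p'} + (1/p')ζ₊^{p'-r} t^r`. -/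
theorem stmt_10 (p' ζm ζp : ℝ) (hp'1 : 1 < p') (hp'2 : p' < 2)
    (hζm : 0 < ζm) (hζ : ζm ≤ ζp) :
    (∀ t : ℝ, 0 ≤ t →
      kappaStar p' ζm ζp t - (1 / p') * t ^ p' ≤
        (1 / p') * ζm ^ p' +
          (if ζp < t then (1 / 2) * ζp ^ (p' - 2) * t ^ 2 else 0)) ∧
    (∀ r : ℝ, 2 < r → ∀ t : ℝ, 0 ≤ t →
      kappaStar p' ζm ζp t - (1 / p') * t ^ p' ≤
        (1 / p') * ζm ^ p' + (1 / p') * ζp ^ (p' - r) * t ^ r) := by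
  refine ⟨aux1 p' ζm ζp hp'1 hp'2 hζm hζ, ?_⟩
  intro r hr t ht
  have hp0 : (0:ℝ) < p' := by linarith
  have h1p : (0:ℝ) < 1 / p' := by positivity
  have hζp : (0:ℝ) < ζp := lt_of_lt_of_le hζm hζ
  have hrpow : (0:ℝ) ≤ (1 / p') * ζp ^ (p' - r) * t ^ r :=
    mul_nonneg (mul_nonneg h1p.le (Real.rpow_nonneg hζp.le _)) (Real.rpow_nonneg ht _)
  have key : (if ζp < t then (1 / 2) * ζp ^ (p' - 2) * t ^ 2 else 0) ≤
      (1 / p') * ζp ^ (p' - r) * t ^ r := by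
    split_ifs with h
    · have ht0 : 0 < t := hζp.trans h
      have e1 : ζp ^ (p' - 2) = ζp ^ (p' - r) * ζp ^ (r - 2) := by
        rw [← Real.rpow_add hζp]; ring_nf
      have e2 : t ^ r = t ^ (r - 2) * t ^ (2:ℕ) := by
        rw [← Real.rpow_natCast t 2, ← Real.rpow_add ht0]; ring_nf
      have e3 : ζp ^ (r - 2) ≤ t ^ (r - 2) :=
        Real.rpow_le_rpow hζp.le h.le (by linarith)
      have key2 : ζp ^ (p' - 2) * t ^ (2:ℕ) ≤ ζp ^ (p' - r) * t ^ r := by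
        rw [e1, e2]
        have : ζp ^ (r - 2) * t ^ (2:ℕ) ≤ t ^ (r - 2) * t ^ (2:ℕ) :=
          mul_le_mul_of_nonneg_right e3 (by positivity)
        calc ζp ^ (p' - r) * ζp ^ (r - 2) * t ^ (2:ℕ)
            = ζp ^ (p' - r) * (ζp ^ (r - 2) * t ^ (2:ℕ)) := by ring
          _ ≤ ζp ^ (p' - r) * (t ^ (r - 2) * t ^ (2:ℕ)) :=
              mul_le_mul_of_nonneg_left this (Real.rpow_pos_of_pos hζp _).le
      have hhalf : (1:ℝ)/2 ≤ 1/p' := by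
        rw [div_le_div_iff₀ (by norm_num) hp0]; linarith
      have hL : (0:ℝ) ≤ ζp ^ (p' - 2) * t ^ (2:ℕ) :=
        mul_nonneg (Real.rpow_nonneg hζp.le _) (by positivity)
      calc (1 / 2) * ζp ^ (p' - 2) * t ^ 2 = (1/2) * (ζp ^ (p' - 2) * t ^ (2:ℕ)) := by ring
        _ ≤ (1/p') * (ζp ^ (p' - r) * t ^ r) := mul_le_mul hhalf key2 hL h1p.le
        _ = (1 / p') * ζp ^ (p' - r) * t ^ r := by ring
    · exact hrpow
  have h1 := aux1 p' ζm ζp hp'1 hp'2 hζm hζ t ht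
  linarith
end

section
/- Let $2 < p < \infty$ with $1/p + 1/p' = 1$, let $\Omega \subset \mathbb{R}^d$ be bounded with finite measure $|\Omega|$, let $\Sigma \subset L^{p'}(\Omega;\mathbb{R}^d)$ be a nonempty closed affine subspace, and let $\sigma$ minimize $\mathcal{J}^*(\tau) = \frac{1}{p'}\int_\Omega |\tau|^{p'}dx$ over $\Sigma$, and $\sigma_\zeta$ minimize $\mathcal{J}^*_\zeta(\tau) = \int_\Omega \kappa^*_\zeta(|\tau|)dx$ over $\Sigma$. If $\sigma \in L^r(\Omega;\mathbb{R}^d)$ for some $r > 2$, then $\mathcal{J}^*(\sigma_\zeta) - \mathcal{J}^*(\sigma) \leq \mathcal{J}^*_\zeta(\sigma_\zeta) - \mathcal{J}^*(\sigma) \leq \frac{|\Omega|}{p'}\zeta_-^{p'} + \frac{1}{p'}\zeta_+^{-(r-p')}\|\sigma\|_{L^r(\Omega)}^r$. -/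
/-
On `[ζ₋, ζ₊]` the integrand `κ*_ζ` is `t ↦ t ^ p' / p'`; outside, it is the even quadratic that
matches this curve to first order at the nearer endpoint. As `p' < 2`, weighted AM-GM puts these
quadratics above `t ^ p' / p'`, whence `𝒥* ≤ 𝒥*_ζ`. Conversely, the inner quadratic is at most
`ζ₋ ^ p' / p'`, and for `t ≥ ζ₊` the outer one exceeds `t ^ p' / p'` by at most
`ζ₊ ^ (p' - r) t ^ r / p'` because `r ≥ 2`. Integrating this bound at `σ` and using
`𝒥*_ζ(σ_ζ) ≤ 𝒥*_ζ(σ)` gives the upper estimate.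
-/

open MeasureTheory

lemma conjExponent_mem_Ioo_one_two {p p' : ℝ} (hp : 2 < p) (hpp' : 1 / p + 1 / p' = 1) :
    p' ∈ Set.Ioo 1 2 := by
  have hp' : p' = p / (p - 1) := by
    have : p' ≠ 0 := by rintro rfl; simp at hpp'; linarith
    field_simp at hpp'
    rw [eq_div_iff (by linarith)]
    linarith
  subst hp'
  constructor
  · rw [lt_div_iff₀ (by linarith)]; linarith
  · rw [div_lt_iff₀ (by linarith)]; linarith

noncomputable def kappaQuad (p' ζ t : ℝ) : ℝ :=
  (1 / 2) * ζ ^ (p' - 2) * t ^ 2 + (1 / p' - 1 / 2) * ζ ^ p'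

section kappaQuad

variable {p' r ζ t : ℝ}

lemma rpow_le_kappaQuad (hp0 : 0 < p') (hp2 : p' ≤ 2) (hζ : 0 < ζ) (ht : 0 ≤ t) :
    1 / p' * t ^ p' ≤ kappaQuad p' ζ t := by
  have hamgm := Real.geom_mean_le_arith_mean2_weighted (w₁ := p' / 2) (w₂ := 1 - p' / 2)
    (by linarith) (by linarith) (by positivity : 0 ≤ ζ ^ (p' - 2) * t ^ 2)
    (by positivity : 0 ≤ ζ ^ p') (by ring)
  have hgeom : (ζ ^ (p' - 2) * t ^ 2) ^ (p' / 2) * (ζ ^ p') ^ (1 - p' / 2) = t ^ p' := by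
    rw [Real.mul_rpow (by positivity) (by positivity), ← Real.rpow_natCast t 2,
      ← Real.rpow_mul ht, ← Real.rpow_mul hζ.le, ← Real.rpow_mul hζ.le, mul_right_comm,
      ← Real.rpow_add hζ, show (p' - 2) * (p' / 2) + p' * (1 - p' / 2) = 0 by ring,
      Real.rpow_zero, one_mul]
    ring_nf
  calc 1 / p' * t ^ p'
      ≤ 1 / p' * (p' / 2 * (ζ ^ (p' - 2) * t ^ 2) + (1 - p' / 2) * ζ ^ p') := by
        rw [← hgeom]; gcongr
    _ = kappaQuad p' ζ t := by unfold kappaQuad; field_simp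

lemma kappaQuad_le_of_le (hζ : 0 < ζ) (ht : 0 ≤ t) (htζ : t ≤ ζ) :
    kappaQuad p' ζ t ≤ 1 / p' * ζ ^ p' := by
  have hsq : ζ ^ (p' - 2) * t ^ 2 ≤ ζ ^ p' := by
    calc ζ ^ (p' - 2) * t ^ 2 ≤ ζ ^ (p' - 2) * ζ ^ 2 := by gcongr
      _ = ζ ^ p' := by rw [← Real.rpow_natCast ζ 2, ← Real.rpow_add hζ]; norm_num
  unfold kappaQuad
  linarith

lemma rpow_sub_two_mul_sq_le (hr : 2 ≤ r) (hζ : 0 < ζ) (hζt : ζ ≤ t) :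
    ζ ^ (p' - 2) * t ^ 2 ≤ ζ ^ (p' - r) * t ^ r := by
  have ht : 0 < t := hζ.trans_le hζt
  calc ζ ^ (p' - 2) * t ^ 2 = ζ ^ (p' - r) * (ζ ^ (r - 2) * t ^ 2) := by
        rw [← mul_assoc, ← Real.rpow_add hζ]; ring_nf
    _ ≤ ζ ^ (p' - r) * (t ^ (r - 2) * t ^ 2) := by gcongr
    _ = ζ ^ (p' - r) * t ^ r := by
        rw [← Real.rpow_natCast t 2, ← Real.rpow_add ht]; norm_num

lemma kappaQuad_le_of_ge (hp0 : 0 < p') (hp2 : p' ≤ 2) (hr : 2 ≤ r) (hζ : 0 < ζ)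
    (hζt : ζ ≤ t) :
    kappaQuad p' ζ t ≤ 1 / p' * t ^ p' + 1 / p' * ζ ^ (p' - r) * t ^ r := by
  have hhalf : 1 / 2 ≤ 1 / p' := one_div_le_one_div_of_le hp0 hp2
  have hquad := rpow_sub_two_mul_sq_le (p' := p') hr hζ hζt
  have hconst : ζ ^ p' ≤ t ^ p' := Real.rpow_le_rpow hζ.le hζt hp0.le
  have hpos : 0 ≤ ζ ^ (p' - r) * t ^ r := by positivity [hζ.trans_le hζt]
  have hconst' := mul_le_mul_of_nonneg_left hconst (sub_nonneg.2 hhalf)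
  have hpos' := mul_nonneg (sub_nonneg.2 hhalf) hpos
  have ht : 0 ≤ t ^ p' := by positivity [hζ.trans_le hζt]
  unfold kappaQuad
  linarith

end kappaQuad

section kappaStar

variable {p' r ζm ζp t : ℝ}

lemma rpow_le_kappaStar (hp0 : 0 < p') (hp2 : p' ≤ 2) (hζm : 0 < ζm) (hζ : ζm ≤ ζp)
    (ht : 0 ≤ t) : 1 / p' * t ^ p' ≤ kappaStar p' ζm ζp t := by
  unfold kappaStar
  split_ifs
  · exact rpow_le_kappaQuad hp0 hp2 hζm ht
  · exact le_rfl
  · exact rpow_le_kappaQuad hp0 hp2 (hζm.trans_le hζ) ht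

lemma kappaStar_le (hp0 : 0 < p') (hp2 : p' ≤ 2) (hr : 2 ≤ r) (hζm : 0 < ζm) (hζ : ζm ≤ ζp)
    (ht : 0 ≤ t) :
    kappaStar p' ζm ζp t ≤ 1 / p' * t ^ p' + 1 / p' * ζm ^ p' + 1 / p' * ζp ^ (p' - r) * t ^ r := by
  have h1 : 0 ≤ 1 / p' * t ^ p' := by positivity
  have h2 : 0 ≤ 1 / p' * ζm ^ p' := by positivity
  have h3 : 0 ≤ 1 / p' * ζp ^ (p' - r) * t ^ r := by positivity [hζm.trans_le hζ]
  unfold kappaStar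
  split_ifs with hinner hmiddle
  · exact (kappaQuad_le_of_le hζm ht hinner).trans (by linarith)
  · linarith
  · exact (kappaQuad_le_of_ge hp0 hp2 hr (hζm.trans_le hζ) (not_le.1 hmiddle).le).trans
      (by linarith)

end kappaStar

section integral

variable {Ω E : Type*} [MeasurableSpace Ω] {μ : Measure Ω} [NormedAddCommGroup E] {f : Ω → E}
  {p' r ζm ζp : ℝ}

lemma integral_rpow_le_toReal_lintegral_kappaStar (hp0 : 0 < p') (hp2 : p' ≤ 2) (hζm : 0 < ζm)
    (hζ : ζm ≤ ζp) (hf : AEStronglyMeasurable f μ)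
    (hfin : ∫⁻ x, ENNReal.ofReal (kappaStar p' ζm ζp ‖f x‖) ∂μ ≠ ⊤) :
    1 / p' * ∫ x, ‖f x‖ ^ p' ∂μ ≤ (∫⁻ x, ENNReal.ofReal (kappaStar p' ζm ζp ‖f x‖) ∂μ).toReal := by
  rw [← integral_const_mul, integral_eq_lintegral_of_nonneg_ae (ae_of_all _ fun x => by positivity)
    ((hf.norm.aemeasurable.pow_const _).const_mul _).aestronglyMeasurable]
  exact ENNReal.toReal_mono hfin <| lintegral_mono fun x =>
    ENNReal.ofReal_le_ofReal (rpow_le_kappaStar hp0 hp2 hζm hζ (norm_nonneg _))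

lemma lintegral_kappaStar_le [IsFiniteMeasure μ] (hp0 : 0 < p') (hp2 : p' ≤ 2) (hr : 2 ≤ r)
    (hζm : 0 < ζm) (hζ : ζm ≤ ζp) (hfp' : Integrable (fun x => ‖f x‖ ^ p') μ)
    (hfr : Integrable (fun x => ‖f x‖ ^ r) μ) :
    ∫⁻ x, ENNReal.ofReal (kappaStar p' ζm ζp ‖f x‖) ∂μ ≤
      ENNReal.ofReal (1 / p' * ∫ x, ‖f x‖ ^ p' ∂μ + (μ Set.univ).toReal / p' * ζm ^ p' +
        1 / p' * ζp ^ (p' - r) * ∫ x, ‖f x‖ ^ r ∂μ) := by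
  set g : Ω → ℝ := fun x =>
    1 / p' * ‖f x‖ ^ p' + 1 / p' * ζm ^ p' + 1 / p' * ζp ^ (p' - r) * ‖f x‖ ^ r
  have hfirst : Integrable (fun x => 1 / p' * ‖f x‖ ^ p' + 1 / p' * ζm ^ p') μ :=
    (hfp'.const_mul _).add (integrable_const _)
  have hg : Integrable g μ := hfirst.add (hfr.const_mul _)
  have hg_integral : ∫ x, g x ∂μ = 1 / p' * ∫ x, ‖f x‖ ^ p' ∂μ +
      (μ Set.univ).toReal / p' * ζm ^ p' + 1 / p' * ζp ^ (p' - r) * ∫ x, ‖f x‖ ^ r ∂μ := by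
    rw [integral_add hfirst (hfr.const_mul _), integral_add (hfp'.const_mul _) (integrable_const _)]
    simp only [integral_const_mul, integral_const, smul_eq_mul, measureReal_def]
    ring
  rw [← hg_integral, ofReal_integral_eq_lintegral_ofReal hg
    (ae_of_all _ fun x => by positivity [hζm.trans_le hζ])]
  exact lintegral_mono fun x =>
    ENNReal.ofReal_le_ofReal (kappaStar_le hp0 hp2 hr hζm hζ (norm_nonneg _))

end integral

theorem stmt_11_general {d : ℕ} {Ω : Type*} [MeasurableSpace Ω] (μ : Measure Ω)
    [IsFiniteMeasure μ]
    (p p' r ζm ζp : ℝ) (hp : 2 < p) (hpp' : 1 / p + 1 / p' = 1) (hr : 2 < r)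
    (hζm : 0 < ζm) (hζ : ζm ≤ ζp)
    (S : AffineSubspace ℝ (Lp (EuclideanSpace ℝ (Fin d)) (ENNReal.ofReal p') μ))
    (σ σζ : Lp (EuclideanSpace ℝ (Fin d)) (ENNReal.ofReal p') μ)
    (hσS : σ ∈ S)
    (hσζmin : ∀ τ ∈ S,
      ∫⁻ x, ENNReal.ofReal (kappaStar p' ζm ζp ‖σζ x‖) ∂μ ≤
        ∫⁻ x, ENNReal.ofReal (kappaStar p' ζm ζp ‖τ x‖) ∂μ)
    (hσr : MemLp (⇑σ) (ENNReal.ofReal r) μ) :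
    (1 / p') * ∫ x, ‖σζ x‖ ^ p' ∂μ - (1 / p') * ∫ x, ‖σ x‖ ^ p' ∂μ ≤
      (∫⁻ x, ENNReal.ofReal (kappaStar p' ζm ζp ‖σζ x‖) ∂μ).toReal -
        (1 / p') * ∫ x, ‖σ x‖ ^ p' ∂μ ∧
    (∫⁻ x, ENNReal.ofReal (kappaStar p' ζm ζp ‖σζ x‖) ∂μ).toReal -
        (1 / p') * ∫ x, ‖σ x‖ ^ p' ∂μ ≤
      (μ Set.univ).toReal / p' * ζm ^ p' +
        (1 / p') * ζp ^ (-(r - p')) * ∫ x, ‖σ x‖ ^ r ∂μ := by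
  obtain ⟨hp'1, hp'2⟩ := conjExponent_mem_Ioo_one_two hp hpp'
  have hp'0 : 0 < p' := by linarith
  have hσp' : Integrable (fun x => ‖σ x‖ ^ p') μ := by
    simpa [ENNReal.toReal_ofReal hp'0.le] using (Lp.memLp σ).integrable_norm_rpow'
  have hσr' : Integrable (fun x => ‖σ x‖ ^ r) μ := by
    simpa [ENNReal.toReal_ofReal (by linarith : 0 ≤ r)] using hσr.integrable_norm_rpow'
  have hupper := (hσζmin σ hσS).trans
    (lintegral_kappaStar_le hp'0 hp'2.le hr.le hζm hζ hσp' hσr')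
  have hlower := integral_rpow_le_toReal_lintegral_kappaStar hp'0 hp'2.le hζm hζ
    (Lp.aestronglyMeasurable σζ) (ne_top_of_le_ne_top ENNReal.ofReal_ne_top hupper)
  have hupper' := ENNReal.toReal_le_of_le_ofReal (by positivity [hζm.trans_le hζ]) hupper
  rw [neg_sub]
  constructor <;> linarith

/-- Convergence in `ζ`: if `σ` minimizes `𝒥*(τ) = (1/p')∫|τ|^{p'}` and `σ_ζ`
minimizes the regularized energy `𝒥*_ζ(τ) = ∫ κ*_ζ(|τ|)` over a nonempty
closed affine subspace `Σ ⊂ L^{p'}(Ω;ℝ^d)`, and `σ ∈ L^r` for some `r > 2`,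
then `𝒥*(σ_ζ) - 𝒥*(σ) ≤ 𝒥*_ζ(σ_ζ) - 𝒥*(σ)
  ≤ (|Ω|/p') ζ₋^{p'} + (1/p') ζ₊^{-(r-p')} ‖σ‖_{L^r}^r`. -/
theorem stmt_11 {d : ℕ} {Ω : Type*} [MeasurableSpace Ω] (μ : Measure Ω)
    [IsFiniteMeasure μ]
    (p p' r ζm ζp : ℝ) (hp : 2 < p) (hpp' : 1 / p + 1 / p' = 1) (hr : 2 < r)
    (hζm : 0 < ζm) (hζ : ζm ≤ ζp)
    [Fact (1 ≤ ENNReal.ofReal p')]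
    (S : AffineSubspace ℝ (Lp (EuclideanSpace ℝ (Fin d)) (ENNReal.ofReal p') μ))
    (hSne : (S : Set (Lp (EuclideanSpace ℝ (Fin d)) (ENNReal.ofReal p') μ)).Nonempty)
    (hScl : IsClosed (S : Set (Lp (EuclideanSpace ℝ (Fin d)) (ENNReal.ofReal p') μ)))
    (σ σζ : Lp (EuclideanSpace ℝ (Fin d)) (ENNReal.ofReal p') μ)
    (hσS : σ ∈ S) (hσζS : σζ ∈ S)
    (hσmin : ∀ τ ∈ S,
      (1 / p') * ∫ x, ‖σ x‖ ^ p' ∂μ ≤ (1 / p') * ∫ x, ‖τ x‖ ^ p' ∂μ)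
    (hσζmin : ∀ τ ∈ S,
      ∫⁻ x, ENNReal.ofReal (kappaStar p' ζm ζp ‖σζ x‖) ∂μ ≤
        ∫⁻ x, ENNReal.ofReal (kappaStar p' ζm ζp ‖τ x‖) ∂μ)
    (hσr : MemLp (⇑σ) (ENNReal.ofReal r) μ) :
    (1 / p') * ∫ x, ‖σζ x‖ ^ p' ∂μ - (1 / p') * ∫ x, ‖σ x‖ ^ p' ∂μ ≤
      (∫⁻ x, ENNReal.ofReal (kappaStar p' ζm ζp ‖σζ x‖) ∂μ).toReal -
        (1 / p') * ∫ x, ‖σ x‖ ^ p' ∂μ ∧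
    (∫⁻ x, ENNReal.ofReal (kappaStar p' ζm ζp ‖σζ x‖) ∂μ).toReal -
        (1 / p') * ∫ x, ‖σ x‖ ^ p' ∂μ ≤
      (μ Set.univ).toReal / p' * ζm ^ p' +
        (1 / p') * ζp ^ (-(r - p')) * ∫ x, ‖σ x‖ ^ r ∂μ :=
  stmt_11_general μ p p' r ζm ζp hp hpp' hr hζm hζ S σ σζ hσS hσζmin hσr
end

section
/- Let $X, Y$ be normed spaces, $b: U \times X \to \mathbb{R}$ a bounded bilinear form with $|b(u,v)| \leq \|B\| \|u\|_U \|v\|_X$, $U_h \subset U$ and $V_h \subset X$ subspaces, and $\Pi: X \to V_h$ a linear operator with $\|\Pi v\|_X \leq \|\Pi\| \|v\|_X$ and $b(u_h, v - \Pi v) = 0$ for all $u_h \in U_h$, $v \in X$. Let $F \in X^*$, let $\mathfrak{u} \in U$ satisfy $b(\mathfrak{u}, v) = F(v)$ for all $v \in X$, and define $\mathrm{osc}(F) = \sup_{v \neq 0} F(v - \Pi v)/\|v\|_X$. Then for any $u_h \in U_h$: $\sup_{v \neq 0} \frac{b(\mathfrak{u} - u_h, v)}{\|v\|_X} \leq \|\Pi\|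 \sup_{v_h \in V_h \setminus \{0\}} \frac{b(\mathfrak{u} - u_h, v_h)}{\|v_h\|_X} + \mathrm{osc}(F)$. -/
/-- Abstract a posteriori error estimate: if `b` is a bounded bilinear form,
`Π : X → V_h` is a Fortin operator for `U_h` with constant `CPr`, and
`𝔲` solves `b(𝔲, v) = F(v)` for all `v`, then for any `u_h ∈ U_h` the dual
norm of the residual is bounded by `CPr` times its discrete dual norm plus
the data oscillation `osc(F) = sup_{v ≠ 0} F(v - Πv)/‖v‖`. -/
theorem stmt_15 {U X : Type*} [NormedAddCommGroup U] [NormedSpace ℝ U]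
    [NormedAddCommGroup X] [NormedSpace ℝ X]
    (b : U →ₗ[ℝ] X →ₗ[ℝ] ℝ) (CB : ℝ)
    (hb : ∀ (u : U) (v : X), |b u v| ≤ CB * ‖u‖ * ‖v‖)
    (Uh : Subspace ℝ U) (Vh : Subspace ℝ X)
    (Pr : X →ₗ[ℝ] X) (hPrran : ∀ v : X, Pr v ∈ Vh)
    (CPr : ℝ) (hCPr0 : 0 ≤ CPr) (hPr : ∀ v : X, ‖Pr v‖ ≤ CPr * ‖v‖)
    (hFortin : ∀ uh ∈ Uh, ∀ v : X, b uh (v - Pr v) = 0)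
    (F : X →ₗ[ℝ] ℝ) (𝔲 : U) (h𝔲 : ∀ v : X, b 𝔲 v = F v)
    (uh : U) (huh : uh ∈ Uh) :
    sSup {r : ℝ | ∃ v : X, v ≠ 0 ∧ r = b (𝔲 - uh) v / ‖v‖} ≤
      CPr * sSup {r : ℝ | ∃ v ∈ Vh, v ≠ (0 : X) ∧ r = b (𝔲 - uh) v / ‖v‖} +
        sSup {r : ℝ | ∃ v : X, v ≠ 0 ∧ r = F (v - Pr v) / ‖v‖} := by
  set w := 𝔲 - uh with hw
  set S1 := {r : ℝ | ∃ v : X, v ≠ 0 ∧ r = b w v / ‖v‖} with hS1def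
  set S2 := {r : ℝ | ∃ v ∈ Vh, v ≠ (0 : X) ∧ r = b w v / ‖v‖} with hS2def
  set S3 := {r : ℝ | ∃ v : X, v ≠ 0 ∧ r = F (v - Pr v) / ‖v‖} with hS3def
  -- key decomposition: F(v - Pr v) = b w (v - Pr v)
  have hF : ∀ v : X, F (v - Pr v) = b w (v - Pr v) := by
    intro v
    have h1 := hFortin uh huh v
    have h2 := h𝔲 (v - Pr v)
    simp only [hw, map_sub, LinearMap.sub_apply] at *
    linarith
  -- bounds above
  have hS2bdd : BddAbove S2 := by
    refine ⟨CB * ‖w‖, ?_⟩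
    rintro r ⟨v, -, hv0, rfl⟩
    have hvpos : (0:ℝ) < ‖v‖ := norm_pos_iff.mpr hv0
    rw [div_le_iff₀ hvpos]
    exact (le_abs_self _).trans (hb w v)
  have hS3bdd : BddAbove S3 := by
    refine ⟨|CB * ‖𝔲‖| * (1 + CPr), ?_⟩
    rintro r ⟨v, hv0, rfl⟩
    have hvpos : (0:ℝ) < ‖v‖ := norm_pos_iff.mpr hv0
    rw [div_le_iff₀ hvpos]
    have h1 : F (v - Pr v) = b 𝔲 (v - Pr v) := (h𝔲 (v - Pr v)).symm
    have h2 : |b 𝔲 (v - Pr v)| ≤ CB * ‖𝔲‖ * ‖v - Pr v‖ := hb _ _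
    have h3 : ‖v - Pr v‖ ≤ ‖v‖ + CPr * ‖v‖ :=
      (norm_sub_le _ _).trans (by linarith [hPr v])
    have h4 : CB * ‖𝔲‖ ≤ |CB * ‖𝔲‖| := le_abs_self _
    have h5 : (0:ℝ) ≤ ‖v - Pr v‖ := norm_nonneg _
    calc F (v - Pr v) ≤ |b 𝔲 (v - Pr v)| := by rw [h1]; exact le_abs_self _
      _ ≤ |CB * ‖𝔲‖| * ‖v - Pr v‖ := h2.trans (by nlinarith [abs_nonneg (CB * ‖𝔲‖)])
      _ ≤ |CB * ‖𝔲‖| * (‖v‖ + CPr * ‖v‖) :=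
          mul_le_mul_of_nonneg_left h3 (abs_nonneg _)
      _ = |CB * ‖𝔲‖| * (1 + CPr) * ‖v‖ := by ring
  have hS2nn : 0 ≤ sSup S2 := by
    rcases Set.eq_empty_or_nonempty S2 with h | ⟨r, v, hvV, hv0, hr⟩
    · rw [h, Real.sSup_empty]
    · have hvpos : (0:ℝ) < ‖v‖ := norm_pos_iff.mpr hv0
      have hm : -r ∈ S2 := by
        refine ⟨-v, Vh.neg_mem hvV, neg_ne_zero.mpr hv0, ?_⟩
        rw [hr]; simp [neg_div]
      have h1 : r ≤ sSup S2 := le_csSup hS2bdd ⟨v, hvV, hv0, hr⟩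
      have h2 : -r ≤ sSup S2 := le_csSup hS2bdd hm
      linarith
  have hS3nn : 0 ≤ sSup S3 := by
    rcases Set.eq_empty_or_nonempty S3 with h | ⟨r, v, hv0, hr⟩
    · rw [h, Real.sSup_empty]
    · have hm : -r ∈ S3 := by
        refine ⟨-v, neg_ne_zero.mpr hv0, ?_⟩
        rw [hr]; simp [neg_div, map_neg, map_sub]
        ring
      have h1 : r ≤ sSup S3 := le_csSup hS3bdd ⟨v, hv0, hr⟩
      have h2 : -r ≤ sSup S3 := le_csSup hS3bdd hm
      linarith
  rcases Set.eq_empty_or_nonempty S1 with hS1e | hS1ne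
  · rw [hS1e, Real.sSup_empty]
    positivity
  · apply Real.sSup_le _ (by positivity)
    rintro r ⟨v, hv0, rfl⟩
    have hvpos : (0:ℝ) < ‖v‖ := norm_pos_iff.mpr hv0
    have hdec : b w v = b w (Pr v) + F (v - Pr v) := by
      rw [hF v]; simp only [map_sub, LinearMap.sub_apply]; ring
    have ht2 : F (v - Pr v) / ‖v‖ ≤ sSup S3 := le_csSup hS3bdd ⟨v, hv0, rfl⟩
    have ht1 : b w (Pr v) / ‖v‖ ≤ CPr * sSup S2 := by
      by_cases hPv : Pr v = 0
      · rw [hPv]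
        simp only [map_zero, zero_div]
        exact mul_nonneg hCPr0 hS2nn
      · have hPpos : (0:ℝ) < ‖Pr v‖ := norm_pos_iff.mpr hPv
        have h1 : b w (Pr v) / ‖Pr v‖ ≤ sSup S2 :=
          le_csSup hS2bdd ⟨Pr v, hPrran v, hPv, rfl⟩
        rw [div_le_iff₀ hPpos] at h1
        rw [div_le_iff₀ hvpos]
        nlinarith [hPr v]
    have : b w v / ‖v‖ = b w (Pr v) / ‖v‖ + F (v - Pr v) / ‖v‖ := by
      rw [hdec]; ring
    rw [this]
    linarith
end
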